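/- arXiv:2101.02925 — 5 statements merged into one kernel-verified Lean document; each statement's English description precedes it below -/
import Mathlib

section
/- If at some iteration κ₁ an agent's pair of local vectors in CBAA-M equals the fixed point (v*, w*) = (argsort(c), sort(c)), then for all κ > κ₁ that agent's vectors remain equal to (v*, w*). That is, the consensus solution is a fixed point of the composition of the local auction phase and the consensus phase. -/
/-- A trajectory of the CBAA-M algorithm: `n` agents with pairwise distinct positive
bids `c`, communicating over a digraph `E`.  Each agent `i` maintains an index
vector `v i` (entry `none` encodes the value 0, i.e. "no agent") and a bid vector
`w i`, initialized to zero.  Each iteration consists of a local auction phase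
(producing intermediate vectors `v'`, `w'`) followed by an entrywise max-consensus
phase over the in-neighborhood `{h : h = i ∨ E h i}`. -/
structure CBAA (n : ℕ) where
  /-- communication digraph: `E h i` means `h` transmits to `i` -/
  E : Fin n → Fin n → Prop
  /-- the bids -/
  c : Fin n → ℝ
  /-- index vectors; `v κ i j` is entry `j` of agent `i`'s list at iteration `κ` -/
  v : ℕ → Fin n → Fin n → Option (Fin n)
  /-- bid vectors -/
  w : ℕ → Fin n → Fin n → ℝ
  /-- index vectors after Phase 1 of iteration `κ` -/
  v' : ℕ → Fin n → Fin n → Option (Fin n)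
  /-- bid vectors after Phase 1 of iteration `κ` -/
  w' : ℕ → Fin n → Fin n → ℝ
  c_pos : ∀ i, 0 < c i
  c_inj : Function.Injective c
  init_v : ∀ i j, v 0 i j = none
  init_w : ∀ i j, w 0 i j = 0
  /-- Phase 1: an agent already listed in its own vector does nothing -/
  phase1_listed : ∀ κ i, (∃ j, v κ i j = some i) →
      ∀ j, v' κ i j = v κ i j ∧ w' κ i j = w κ i j
  /-- Phase 1: otherwise it inserts its bid at the earliest position whose stored
  bid it strictly exceeds (if such a position exists) -/
  phase1_insert : ∀ κ i, (¬ ∃ j, v κ i j = some i) → ∀ j₀, c i > w κ i j₀ →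
      (∀ j < j₀, ¬ c i > w κ i j) →
      v' κ i j₀ = some i ∧ w' κ i j₀ = c i ∧
      ∀ j ≠ j₀, v' κ i j = v κ i j ∧ w' κ i j = w κ i j
  /-- Phase 1: if there is no such position, nothing changes -/
  phase1_noslot : ∀ κ i, (¬ ∃ j, v κ i j = some i) → (¬ ∃ j₀, c i > w κ i j₀) →
      ∀ j, v' κ i j = v κ i j ∧ w' κ i j = w κ i j
  /-- Phase 2: entrywise max-consensus over in-neighbors (and self), copying for
  each position the `(v, w)` pair of an agent achieving the maximal bid -/
  phase2 : ∀ κ i j, ∃ h, (h = i ∨ E h i) ∧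
      w (κ+1) i j = w' κ h j ∧ v (κ+1) i j = v' κ h j ∧
      ∀ h', (h' = i ∨ E h' i) → w' κ h' j ≤ w' κ h j

/-- `σ` sorts the bids decreasingly: `c (σ 0) > c (σ 1) > …` -/
def SortsBids {n : ℕ} (c : Fin n → ℝ) (σ : Equiv.Perm (Fin n)) : Prop :=
  ∀ a b : Fin n, a < b → c (σ b) < c (σ a)

def CBAAFixInv {n : ℕ} (S : CBAA n) (σ : Equiv.Perm (Fin n))
    (W : Fin n → Fin n → ℝ) (V : Fin n → Fin n → Option (Fin n)) : Prop :=
  ∀ i j, W i j ≤ S.c (σ j) ∧ ∀ h, W i j = S.c h → V i j = some h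

lemma step1 {n : ℕ} (S : CBAA n) (σ : Equiv.Perm (Fin n)) (hσ : SortsBids S.c σ)
    (κ : ℕ) (hP : CBAAFixInv S σ (S.w κ) (S.v κ)) : CBAAFixInv S σ (S.w' κ) (S.v' κ) := by
  intro i j
  by_cases hlist : ∃ j', S.v κ i j' = some i
  · obtain ⟨hv, hw⟩ := S.phase1_listed κ i hlist j
    rw [hv, hw]; exact hP i j
  · by_cases hslot : ∃ j₀, S.c i > S.w κ i j₀
    · -- find minimal slot
      set T : Finset (Fin n) := Finset.univ.filter (fun j => S.c i > S.w κ i j) with hT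
      have hne : T.Nonempty := by
        obtain ⟨j₀, hj₀⟩ := hslot
        exact ⟨j₀, by simp [hT, hj₀]⟩
      set j₀ := T.min' hne with hj₀def
      have hj₀mem : S.c i > S.w κ i j₀ := by
        have := T.min'_mem hne
        simpa [hT] using this
      have hmin : ∀ j' < j₀, ¬ S.c i > S.w κ i j' := by
        intro j' hlt hbid
        have : j₀ ≤ j' := T.min'_le j' (by simp [hT, hbid])
        exact absurd hlt (not_lt.mpr this)
      obtain ⟨h1, h2, h3⟩ := S.phase1_insert κ i hlist j₀ hj₀mem hmin
      by_cases hj : j = j₀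
      · subst hj
        have hle : j₀ ≤ σ.symm i := by
          by_contra hc
          push_neg at hc
          have h4 : ¬ S.c i > S.w κ i (σ.symm i) := hmin _ hc
          push_neg at h4
          have h5 : S.w κ i (σ.symm i) ≤ S.c (σ (σ.symm i)) := (hP i (σ.symm i)).1
          rw [σ.apply_symm_apply] at h5
          have h6 : S.w κ i (σ.symm i) = S.c i := le_antisymm h5 h4
          exact hlist ⟨σ.symm i, (hP i (σ.symm i)).2 i h6⟩
        have hci : S.c i ≤ S.c (σ j₀) := by
          rcases lt_or_eq_of_le hle with hlt | heq
          · have := hσ j₀ (σ.symm i) hlt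
            rw [σ.apply_symm_apply] at this
            exact this.le
          · rw [heq, σ.apply_symm_apply]
        refine ⟨by rw [h2]; exact hci, ?_⟩
        intro h hh
        rw [h2] at hh
        rw [h1, S.c_inj hh]
      · obtain ⟨hv, hw⟩ := h3 j hj
        rw [hv, hw]; exact hP i j
    · obtain ⟨hv, hw⟩ := S.phase1_noslot κ i hlist hslot j
      rw [hv, hw]; exact hP i j

lemma inv_all {n : ℕ} (S : CBAA n) (σ : Equiv.Perm (Fin n)) (hσ : SortsBids S.c σ) :
    ∀ κ, CBAAFixInv S σ (S.w κ) (S.v κ) := by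
  intro κ
  induction κ with
  | zero =>
    intro i j
    rw [S.init_w, S.init_v]
    exact ⟨(S.c_pos (σ j)).le, fun h hh => absurd hh.symm (S.c_pos h).ne'⟩
  | succ κ ih =>
    have hP' := step1 S σ hσ κ ih
    intro i j
    obtain ⟨h, _, hw, hv, _⟩ := S.phase2 κ i j
    rw [hw, hv]
    exact hP' h j

/-- the consensus solution `(v*, w*) = (argsort c, sort c)` is a fixed
point: if an agent's vectors equal it at iteration `κ₁`, they remain so forever. -/
theorem cbaa_solution_is_fixed_point {n : ℕ} (S : CBAA n)
    (σ : Equiv.Perm (Fin n)) (hσ : SortsBids S.c σ)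
    (κ₁ : ℕ) (i : Fin n)
    (hv : ∀ j, S.v κ₁ i j = some (σ j)) (hw : ∀ j, S.w κ₁ i j = S.c (σ j)) :
    ∀ κ, κ₁ < κ → ∀ j, S.v κ i j = some (σ j) ∧ S.w κ i j = S.c (σ j) := by
  have key : ∀ κ, κ₁ ≤ κ → ∀ j, S.v κ i j = some (σ j) ∧ S.w κ i j = S.c (σ j) := by
    intro κ hκ
    induction κ, hκ using Nat.le_induction with
    | base => exact fun j => ⟨hv j, hw j⟩
    | succ κ hκ ih =>
      intro j
      have hlist : ∃ j', S.v κ i j' = some i :=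
        ⟨σ.symm i, by rw [(ih (σ.symm i)).1, σ.apply_symm_apply]⟩
      have hfix : ∀ j', S.v' κ i j' = some (σ j') ∧ S.w' κ i j' = S.c (σ j') := by
        intro j'
        obtain ⟨h1, h2⟩ := S.phase1_listed κ i hlist j'
        exact ⟨by rw [h1, (ih j').1], by rw [h2, (ih j').2]⟩
      obtain ⟨h, _, hw2, hv2, hmax⟩ := S.phase2 κ i j
      have hub : S.w' κ h j ≤ S.c (σ j) := (step1 S σ hσ κ (inv_all S σ hσ κ) h j).1
      have hlb : S.c (σ j) ≤ S.w' κ h j := by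
        rw [← (hfix j).2]; exact hmax i (Or.inl rfl)
      have heq : S.w' κ h j = S.c (σ j) := le_antisymm hub hlb
      have hvh : S.v' κ h j = some (σ j) :=
        (step1 S σ hσ κ (inv_all S σ hσ κ) h j).2 (σ j) heq
      exact ⟨by rw [hv2, hvh], by rw [hw2, heq]⟩
  exact fun κ hκ => key κ hκ.le
end

section
/- In CBAA-M with distinct positive bids on a strongly connected directed graph, there exists an iteration κ̄ ≤ n·ℓ such that for all κ > κ̄ and all agents i, v_i(κ) = argsort(c) and w_i(κ) = sort(c), where ℓ is the maximum shortest-directed-path length between ordered pairs of nodes. -/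
def hasWalk {n : ℕ} (E : Fin n → Fin n → Prop) : ℕ → Fin n → Fin n → Prop
  | 0, j, i => j = i
  | (k+1), j, i => ∃ m, E j m ∧ hasWalk E k m i

noncomputable def pdist {n : ℕ} (E : Fin n → Fin n → Prop) (j i : Fin n) : ℕ :=
  sInf {k | hasWalk E k j i}

noncomputable def graphL {n : ℕ} (E : Fin n → Fin n → Prop) : ℕ :=
  Finset.univ.sup (fun p : Fin n × Fin n => pdist E p.1 p.2)

-- ===== aux =====

/-- Full description of the effect of Phase 1. -/
lemma cbaa_w'_cases {n : ℕ} (S : CBAA n) (κ : ℕ) (i : Fin n) :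
    (∀ j, S.v' κ i j = S.v κ i j ∧ S.w' κ i j = S.w κ i j) ∨
    ∃ j₀ : Fin n, (¬ ∃ j, S.v κ i j = some i) ∧ S.c i > S.w κ i j₀ ∧
      S.v' κ i j₀ = some i ∧ S.w' κ i j₀ = S.c i ∧
      (∀ j ≠ j₀, S.v' κ i j = S.v κ i j ∧ S.w' κ i j = S.w κ i j) ∧
      (∀ j < j₀, ¬ S.c i > S.w κ i j) := by
  classical
  by_cases hl : ∃ j, S.v κ i j = some i
  · exact Or.inl (S.phase1_listed κ i hl)
  by_cases hs : ∃ j₀, S.c i > S.w κ i j₀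
  · have hne : ∃ m : ℕ, ∃ hm : m < n, S.c i > S.w κ i ⟨m, hm⟩ := by
      obtain ⟨j₀, hj₀⟩ := hs
      exact ⟨j₀, j₀.isLt, by simpa using hj₀⟩
    obtain ⟨hm, hgt⟩ := Nat.find_spec hne
    set j₀ : Fin n := ⟨Nat.find hne, hm⟩ with hj₀def
    have hmin : ∀ j < j₀, ¬ S.c i > S.w κ i j := by
      intro j hj hc
      exact Nat.find_min hne hj ⟨j.isLt, by simpa using hc⟩
    obtain ⟨h1, h2, h3⟩ := S.phase1_insert κ i hl j₀ hgt hmin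
    exact Or.inr ⟨j₀, hl, hgt, h1, h2, h3, hmin⟩
  · exact Or.inl (S.phase1_noslot κ i hl hs)

lemma cbaa_w_le_w' {n : ℕ} (S : CBAA n) (κ : ℕ) (i j : Fin n) :
    S.w κ i j ≤ S.w' κ i j := by
  rcases cbaa_w'_cases S κ i with hc | ⟨j₀, _, hgt, _, hw, hrest, _⟩
  · rw [(hc j).2]
  · by_cases hj : j = j₀
    · subst hj; rw [hw]; exact le_of_lt hgt
    · rw [(hrest j hj).2]

def cbaaOK {n : ℕ} (S : CBAA n) (σ : Equiv.Perm (Fin n))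
    (V : Fin n → Fin n → Option (Fin n)) (W : Fin n → Fin n → ℝ) : Prop :=
  ∀ i j, ((V i j = none ∧ W i j = 0) ∨ ∃ a, V i j = some a ∧ W i j = S.c a) ∧
    W i j ≤ S.c (σ j)

lemma cbaa_good {n : ℕ} (S : CBAA n) (σ : Equiv.Perm (Fin n)) (hσ : SortsBids S.c σ) :
    ∀ κ, cbaaOK S σ (S.v κ) (S.w κ) ∧ cbaaOK S σ (S.v' κ) (S.w' κ) := by
  have step1 : ∀ κ, cbaaOK S σ (S.v κ) (S.w κ) → cbaaOK S σ (S.v' κ) (S.w' κ) := by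
    intro κ h i j
    rcases cbaa_w'_cases S κ i with hc | ⟨j₀, hnl, hgt, hv, hw, hrest, hmin⟩
    · rw [(hc j).1, (hc j).2]; exact h i j
    · by_cases hj : j = j₀
      · subst hj
        refine ⟨Or.inr ⟨i, hv, hw⟩, ?_⟩
        rw [hw]
        by_contra hlt
        push_neg at hlt
        set a := σ.symm i with ha
        have hia : S.c (σ a) = S.c i := by rw [Equiv.apply_symm_apply]
        have haj : a < j := by
          rcases lt_trichotomy a j with h' | h' | h'
          · exact h'
          · exfalso; rw [h'] at hia; linarith
          · have := hσ j a h'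
            rw [hia] at this; linarith
        have h1 := hmin a haj
        have h2 := (h i a).2
        rw [hia] at h2
        have heq : S.w κ i a = S.c i := le_antisymm h2 (not_lt.mp h1)
        rcases (h i a).1 with ⟨_, hz⟩ | ⟨b, hb, hcb⟩
        · have := S.c_pos i; rw [hz] at heq; linarith
        · have hbi : b = i := S.c_inj (by rw [← hcb, heq])
          exact hnl ⟨a, hbi ▸ hb⟩
      · rw [(hrest j hj).1, (hrest j hj).2]; exact h i j
  have step2 : ∀ κ, cbaaOK S σ (S.v' κ) (S.w' κ) → cbaaOK S σ (S.v (κ+1)) (S.w (κ+1)) := by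
    intro κ h i j
    obtain ⟨h', _, hw, hv, _⟩ := S.phase2 κ i j
    rw [hw, hv]; exact h h' j
  intro κ
  induction κ with
  | zero =>
      have h0 : cbaaOK S σ (S.v 0) (S.w 0) := by
        intro i j
        rw [S.init_v, S.init_w]
        exact ⟨Or.inl ⟨rfl, rfl⟩, le_of_lt (S.c_pos _)⟩
      exact ⟨h0, step1 0 h0⟩
  | succ κ ih =>
      have h1 := step2 κ ih.2
      exact ⟨h1, step1 (κ+1) h1⟩

lemma cbaa_w'_le_next {n : ℕ} (S : CBAA n) (κ : ℕ) (i j : Fin n) :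
    S.w' κ i j ≤ S.w (κ+1) i j := by
  obtain ⟨h, _, hw, _, hmax⟩ := S.phase2 κ i j
  rw [hw]; exact hmax i (Or.inl rfl)

lemma cbaa_w_mono {n : ℕ} (S : CBAA n) {κ κ' : ℕ} (h : κ ≤ κ') (i j : Fin n) :
    S.w κ i j ≤ S.w κ' i j := by
  induction κ' with
  | zero =>
      have h0 : κ = 0 := by omega
      subst h0; exact le_refl _
  | succ κ' ih =>
      rcases Nat.lt_or_ge κ (κ'+1) with h' | h'
      · exact le_trans (ih (by omega))
          (le_trans (cbaa_w_le_w' S κ' i j) (cbaa_w'_le_next S κ' i j))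
      · have he : κ = κ' + 1 := by omega
        subst he; exact le_refl _

lemma cbaa_persist {n : ℕ} (S : CBAA n) (σ : Equiv.Perm (Fin n)) (hσ : SortsBids S.c σ)
    {κ κ' : ℕ} {i j : Fin n} (h : S.w κ i j = S.c (σ j)) (hle : κ ≤ κ') :
    S.w κ' i j = S.c (σ j) :=
  le_antisymm ((cbaa_good S σ hσ κ').1 i j).2 (h ▸ cbaa_w_mono S hle i j)

lemma cbaa_w'_sat {n : ℕ} (S : CBAA n) (σ : Equiv.Perm (Fin n)) (hσ : SortsBids S.c σ)
    {κ : ℕ} {i j : Fin n} (h : S.w κ i j = S.c (σ j)) :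
    S.w' κ i j = S.c (σ j) :=
  le_antisymm ((cbaa_good S σ hσ κ).2 i j).2 (h ▸ cbaa_w_le_w' S κ i j)

lemma cbaa_prop {n : ℕ} (S : CBAA n) (σ : Equiv.Perm (Fin n)) (hσ : SortsBids S.c σ)
    {κ : ℕ} {i j u : Fin n} (hu : u = i ∨ S.E u i) (h : S.w' κ u j = S.c (σ j)) :
    S.w (κ+1) i j = S.c (σ j) := by
  obtain ⟨h', _, hw, _, hmax⟩ := S.phase2 κ i j
  refine le_antisymm ((cbaa_good S σ hσ (κ+1)).1 i j).2 ?_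
  rw [hw, ← h]
  exact hmax u hu

lemma cbaa_walk {n : ℕ} (S : CBAA n) (σ : Equiv.Perm (Fin n)) (hσ : SortsBids S.c σ)
    (j : Fin n) : ∀ k κ₀ (u i : Fin n), S.w' κ₀ u j = S.c (σ j) →
      hasWalk S.E (k+1) u i → ∀ κ, κ₀ + (k+1) ≤ κ → S.w κ i j = S.c (σ j) := by
  intro k
  induction k with
  | zero =>
      rintro κ₀ u i hu ⟨m, hE, hm⟩ κ hκ
      have hmi : m = i := hm
      subst hmi
      exact cbaa_persist S σ hσ (cbaa_prop S σ hσ (Or.inr hE) hu) (by omega)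
  | succ k ih =>
      rintro κ₀ u i hu ⟨m, hE, hm⟩ κ hκ
      have h1 : S.w (κ₀+1) m j = S.c (σ j) := cbaa_prop S σ hσ (Or.inr hE) hu
      exact ih (κ₀+1) m i (cbaa_w'_sat S σ hσ h1) hm κ (by omega)

lemma cbaa_pdist_spec {n : ℕ} (S : CBAA n)
    (hsc : ∀ j i : Fin n, j ≠ i → ∃ k, 0 < k ∧ hasWalk S.E k j i)
    {j i : Fin n} (hne : j ≠ i) :
    0 < pdist S.E j i ∧ hasWalk S.E (pdist S.E j i) j i := by
  obtain ⟨k, _, hw⟩ := hsc j i hne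
  have hmem : pdist S.E j i ∈ {k | hasWalk S.E k j i} := Nat.sInf_mem ⟨k, hw⟩
  refine ⟨?_, hmem⟩
  rcases Nat.eq_zero_or_pos (pdist S.E j i) with h0 | hp
  · exfalso
    rw [h0] at hmem
    exact hne hmem
  · exact hp

lemma cbaa_pdist_le {n : ℕ} (S : CBAA n) (j i : Fin n) :
    pdist S.E j i ≤ graphL S.E :=
  Finset.le_sup (f := fun p : Fin n × Fin n => pdist S.E p.1 p.2) (Finset.mem_univ (j, i))

lemma cbaa_main {n : ℕ} (S : CBAA n)
    (hsc : ∀ j i : Fin n, j ≠ i → ∃ k, 0 < k ∧ hasWalk S.E k j i)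
    (σ : Equiv.Perm (Fin n)) (hσ : SortsBids S.c σ) :
    ∀ t, t ≤ n → ∀ κ, t * max (graphL S.E) 1 ≤ κ →
      ∀ i (j : Fin n), (j : ℕ) < t → S.w κ i j = S.c (σ j) := by
  set L := max (graphL S.E) 1 with hL
  have hL1 : 1 ≤ L := le_max_right _ _
  intro t
  induction t with
  | zero => intro _ _ _ _ _ hj; omega
  | succ t ih =>
      intro ht κ hκ i j hj
      rcases Nat.lt_or_ge (j : ℕ) t with hjt | hjt
      · exact ih (by omega) κ (le_trans (by nlinarith) hκ) i j hjt
      · have hjt' : (j : ℕ) = t := by omega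
        set s := σ j with hs
        set κ₀ := t * L with hκ₀
        have hsat : ∀ κ', κ₀ ≤ κ' → ∀ i' (j' : Fin n), (j' : ℕ) < t →
            S.w κ' i' j' = S.c (σ j') := fun κ' hκ' => ih (by omega) κ' hκ'
        -- Phase 1 at κ₀ puts c s at position j in agent s's vector
        have hA : S.w' κ₀ s j = S.c (σ j) := by
          by_cases hl : ∃ j', S.v κ₀ s j' = some s
          · obtain ⟨j', hj'⟩ := hl
            have hw' : S.w κ₀ s j' = S.c s := by
              rcases ((cbaa_good S σ hσ κ₀).1 s j').1 with ⟨hv, _⟩ | ⟨a, hva, hwa⟩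
              · rw [hv] at hj'; exact absurd hj' (by simp)
              · rw [hva] at hj'
                rw [hwa, Option.some_injective _ hj']
            have hje : j' = j := by
              rcases lt_trichotomy ((j' : ℕ)) t with h' | h' | h'
              · exfalso
                have h1 := hsat κ₀ le_rfl s j' h'
                have h2 : σ j' = σ j := S.c_inj (by rw [← h1, hw'])
                have := σ.injective h2
                omega
              · exact Fin.ext (by omega)
              · exfalso
                have hb := ((cbaa_good S σ hσ κ₀).1 s j').2
                have hlt := hσ j j' (show (j : ℕ) < (j' : ℕ) by omega)
                rw [hw'] at hb
                simp only [hs] at hb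
                linarith
            subst hje
            rw [(S.phase1_listed κ₀ s ⟨j', hj'⟩ j').2, hw']
          · have hb := ((cbaa_good S σ hσ κ₀).1 s j).2
            have hgt : S.c s > S.w κ₀ s j := by
              rcases lt_or_eq_of_le hb with h' | h'
              · exact h'
              · exfalso
                rcases ((cbaa_good S σ hσ κ₀).1 s j).1 with ⟨_, h0⟩ | ⟨a, hva, hwa⟩
                · have := S.c_pos (σ j); rw [h0] at h'; linarith
                · have haj : a = σ j := S.c_inj (by rw [← hwa, h'])
                  exact hl ⟨j, by rw [hva, haj]⟩
            have hmin : ∀ j' < j, ¬ S.c s > S.w κ₀ s j' := by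
              intro j' hj'
              have h1 := hsat κ₀ le_rfl s j' (by exact_mod_cast (by omega : (j' : ℕ) < t))
              have h2 := hσ j' j hj'
              rw [h1]
              simp only [hs]
              exact not_lt.mpr (le_of_lt h2)
            exact (S.phase1_insert κ₀ s hl j hgt hmin).2.1
        -- propagate
        by_cases his : i = s
        · subst his
          exact cbaa_persist S σ hσ (cbaa_prop S σ hσ (Or.inl rfl) hA) (by
            have : (t+1) * L = κ₀ + L := by ring
            omega)
        · have hne : s ≠ i := fun h => his h.symm
          obtain ⟨hd1, hdw⟩ := cbaa_pdist_spec S hsc hne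
          have hdle : pdist S.E s i ≤ L := le_trans (cbaa_pdist_le S s i) (le_max_left _ _)
          obtain ⟨k, hk⟩ : ∃ k, pdist S.E s i = k + 1 := ⟨pdist S.E s i - 1, by omega⟩
          rw [hk] at hdw
          exact cbaa_walk S σ hσ j k κ₀ s i hA hdw κ (by
            have : (t+1) * L = κ₀ + L := by ring
            omega)


/-- on a strongly connected digraph, CBAA-M converges in at most
`n · ℓ` iterations: all agents end up holding `v* = argsort c`, `w* = sort c`. -/
theorem cbaa_converges {n : ℕ} (hn : 0 < n) (S : CBAA n)
    (hsc : ∀ j i : Fin n, j ≠ i → ∃ k, 0 < k ∧ hasWalk S.E k j i)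
    (σ : Equiv.Perm (Fin n)) (hσ : SortsBids S.c σ) :
    ∃ κbar, κbar ≤ n * graphL S.E ∧ ∀ κ, κbar < κ → ∀ i j,
      S.v κ i j = some (σ j) ∧ S.w κ i j = S.c (σ j) := by
  classical
  refine ⟨n * graphL S.E, le_rfl, ?_⟩
  intro κ hκ i j
  have hκ' : n * max (graphL S.E) 1 ≤ κ := by
    rcases Nat.eq_zero_or_pos (graphL S.E) with h0 | hpos
    · have hn1 : n = 1 := by
        by_contra h
        have hn2 : 2 ≤ n := by omega
        have hne : (⟨0, by omega⟩ : Fin n) ≠ ⟨1, by omega⟩ := by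
          simp [Fin.ext_iff]
        obtain ⟨hp, _⟩ := cbaa_pdist_spec S hsc hne
        have := cbaa_pdist_le S (⟨0, by omega⟩ : Fin n) ⟨1, by omega⟩
        omega
      rw [h0] at hκ ⊢
      simp only [hn1]
      omega
    · rw [max_eq_left hpos]
      omega
  have hw := cbaa_main S hsc σ hσ n le_rfl κ hκ' i j j.isLt
  have hv : S.v κ i j = some (σ j) := by
    rcases ((cbaa_good S σ hσ κ).1 i j).1 with ⟨_, h0⟩ | ⟨a, hva, hwa⟩
    · rw [hw] at h0
      exact absurd h0 (ne_of_gt (S.c_pos (σ j)))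
    · have : a = σ j := S.c_inj (by rw [← hwa, hw])
      rw [hva, this]
  exact ⟨hv, hw⟩
end

section
/- In CBAA-M with distinct positive bids, at any iteration, each entry (w_i)_j of any agent's bid vector is either 0 or equals one of the bids c_h for some agent h, and (w_i)_j ≤ (w*)_j where w* = sort(c) (entries sorted decreasingly). -/
/-- every entry of every bid vector is either `0` or one of the bids,
and entry `j` never exceeds the `j`-th largest bid `(w*)_j = c (σ j)`. -/
theorem cbaa_bid_entries_bounded {n : ℕ} (S : CBAA n)
    (σ : Equiv.Perm (Fin n)) (hσ : SortsBids S.c σ) :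
    ∀ κ i j, (S.w κ i j = 0 ∨ ∃ h, S.w κ i j = S.c h) ∧ S.w κ i j ≤ S.c (σ j) := by
  classical
  have mono : ∀ a b : Fin n, a ≤ b → S.c (σ b) ≤ S.c (σ a) := by
    intro a b hab
    rcases lt_or_eq_of_le hab with h | h
    · exact (hσ a b h).le
    · rw [h]
  suffices H : ∀ κ i j, ((S.v κ i j = none ∧ S.w κ i j = 0) ∨
      ∃ h, S.v κ i j = some h ∧ S.w κ i j = S.c h) ∧ S.w κ i j ≤ S.c (σ j) by
    intro κ i j
    obtain ⟨h1, h2⟩ := H κ i j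
    refine ⟨?_, h2⟩
    rcases h1 with ⟨_, h0⟩ | ⟨h, _, hc⟩
    · exact Or.inl h0
    · exact Or.inr ⟨h, hc⟩
  intro κ
  induction κ with
  | zero =>
    intro i j
    refine ⟨Or.inl ⟨S.init_v i j, S.init_w i j⟩, ?_⟩
    rw [S.init_w i j]; exact (S.c_pos _).le
  | succ κ ih =>
    have H' : ∀ i j, ((S.v' κ i j = none ∧ S.w' κ i j = 0) ∨
        ∃ h, S.v' κ i j = some h ∧ S.w' κ i j = S.c h) ∧ S.w' κ i j ≤ S.c (σ j) := by
      intro i j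
      by_cases hlisted : ∃ j, S.v κ i j = some i
      · obtain ⟨hv, hw⟩ := S.phase1_listed κ i hlisted j
        rw [hv, hw]; exact ih i j
      · by_cases hslot : ∃ j₀, S.c i > S.w κ i j₀
        · obtain ⟨j₀, hj₀, hmin'⟩ :=
            (wellFounded_lt (α := Fin n)).has_min {j | S.c i > S.w κ i j} hslot
          have hmin : ∀ j < j₀, ¬ S.c i > S.w κ i j := fun j hj hc => hmin' j hc hj
          obtain ⟨hv0, hw0, hrest⟩ := S.phase1_insert κ i hlisted j₀ hj₀ hmin
          by_cases hjj : j = j₀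
          · subst hjj
            refine ⟨Or.inr ⟨i, hv0, hw0⟩, ?_⟩
            rw [hw0]
            -- show `c i ≤ c (σ j)`
            have ha : S.c i = S.c (σ (σ.symm i)) := by rw [Equiv.apply_symm_apply]
            have hle : j ≤ σ.symm i := by
              by_contra hlt
              push_neg at hlt
              have hge : S.c i ≤ S.w κ i (σ.symm i) := not_lt.mp (hmin _ hlt)
              obtain ⟨hA, hB⟩ := ih i (σ.symm i)
              rcases hA with ⟨_, h0⟩ | ⟨h, hvh, hwh⟩
              · rw [h0] at hge; exact absurd hge (not_le.mpr (S.c_pos i))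
              · have hne : h ≠ i := fun he => hlisted ⟨σ.symm i, he ▸ hvh⟩
                have : S.c i < S.c h := lt_of_le_of_ne (hwh ▸ hge)
                  (fun he => hne (S.c_inj he.symm))
                rw [hwh, ← ha] at hB
                exact absurd (this.trans_le hB) (lt_irrefl _)
            calc S.c i = S.c (σ (σ.symm i)) := ha
              _ ≤ S.c (σ j) := mono j (σ.symm i) hle
          · obtain ⟨hv, hw⟩ := hrest j hjj
            rw [hv, hw]; exact ih i j
        · obtain ⟨hv, hw⟩ := S.phase1_noslot κ i hlisted hslot j
          rw [hv, hw]; exact ih i j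
    intro i j
    obtain ⟨h, _, hw, hv, _⟩ := S.phase2 κ i j
    rw [hw, hv]; exact H' h j
end

section
/- In CBAA-M with distinct positive bids, the nonzero entries of each agent's bid vector w_i are strictly decreasing along positions: if (w_i)_j > 0 and (w_i)_{j'} > 0 with j < j', then (w_i)_j > (w_i)_{j'}. This property is preserved by both the local auction phase and the consensus phase. -/
open Classical in
def CBAAInv {n : ℕ} (c : Fin n → ℝ) (x : Fin n → ℝ) (v : Fin n → Option (Fin n)) : Prop :=
  (∀ j, x j = 0 ∨ ∃ h, v j = some h ∧ x j = c h) ∧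
  (∀ j j' : Fin n, j ≤ j' → x j = 0 → x j' = 0) ∧
  (∀ j j' : Fin n, j < j' → 0 < x j → 0 < x j' → x j' < x j)

lemma CBAAInv.nonneg {n : ℕ} {c x : Fin n → ℝ} {v : Fin n → Option (Fin n)}
    (hc : ∀ i, 0 < c i) (H : CBAAInv c x v) (j : Fin n) : 0 ≤ x j := by
  rcases H.1 j with h | ⟨h, _, hx⟩
  · exact h.ge
  · exact hx ▸ (hc h).le

lemma cbaa_inv_step1 {n : ℕ} (S : CBAA n) (κ : ℕ)
    (IH : ∀ i, CBAAInv S.c (S.w κ i) (S.v κ i)) :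
    ∀ i, CBAAInv S.c (S.w' κ i) (S.v' κ i) := by
  classical
  intro i
  obtain ⟨Q, B, C⟩ := IH i
  by_cases hl : ∃ j, S.v κ i j = some i
  · have h := S.phase1_listed κ i hl
    refine ⟨fun j => ?_, fun j j' hle h0 => ?_, fun j j' hlt h1 h2 => ?_⟩
    · rw [(h j).1, (h j).2]; exact Q j
    · rw [(h j').2]; exact B j j' hle ((h j).2 ▸ h0)
    · rw [(h j).2, (h j').2]; exact C j j' hlt ((h j).2 ▸ h1) ((h j').2 ▸ h2)
  · by_cases hs : ∃ j₀, S.c i > S.w κ i j₀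
    · obtain ⟨j₁, hj₁⟩ := hs
      obtain ⟨j₀, hj₀mem, hj₀min⟩ := Finset.exists_min_image
        (Finset.univ.filter fun j => S.c i > S.w κ i j) id
        ⟨j₁, Finset.mem_filter.2 ⟨Finset.mem_univ _, hj₁⟩⟩
      have hj₀ : S.c i > S.w κ i j₀ := (Finset.mem_filter.1 hj₀mem).2
      have hmin : ∀ j < j₀, ¬ S.c i > S.w κ i j := by
        intro j hjlt hj
        exact absurd (hj₀min j (Finset.mem_filter.2 ⟨Finset.mem_univ _, hj⟩)) (not_le.2 hjlt)
      obtain ⟨hv0, hw0, hrest⟩ := S.phase1_insert κ i hl j₀ hj₀ hmin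
      -- earlier entries exceed c i strictly
      have hbefore : ∀ j < j₀, S.c i < S.w κ i j := by
        intro j hjlt
        have hge : S.c i ≤ S.w κ i j := not_lt.1 (hmin j hjlt)
        rcases hge.lt_or_eq with h | h
        · exact h
        · exfalso
          rcases Q j with h0 | ⟨a, hva, hwa⟩
          · rw [h0] at h; exact absurd (h ▸ S.c_pos i) (lt_irrefl 0)
          · have : a = i := S.c_inj (by rw [← hwa, ← h])
            exact hl ⟨j, this ▸ hva⟩
      refine ⟨fun j => ?_, fun j j' hle h0 => ?_, fun j j' hlt h1 h2 => ?_⟩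
      · by_cases hj : j = j₀
        · subst hj; exact Or.inr ⟨i, hv0, hw0⟩
        · rw [(hrest j hj).1, (hrest j hj).2]; exact Q j
      · -- prefix of positives
        have hjne : j ≠ j₀ := by
          intro h; rw [h, hw0] at h0; exact absurd (h0 ▸ S.c_pos i) (lt_irrefl 0)
        have hw : S.w κ i j = 0 := (hrest j hjne).2 ▸ h0
        have hjgt : j₀ < j := by
          rcases lt_trichotomy j j₀ with h | h | h
          · exact absurd (hbefore j h) (by rw [hw]; exact not_lt.2 (S.c_pos i).le)
          · exact absurd h hjne
          · exact h
        have hj'ne : j' ≠ j₀ := fun h => absurd (h ▸ hle) (not_le.2 (h ▸ hjgt))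
        rw [(hrest j' hj'ne).2]
        exact B j j' hle hw
      · -- sortedness
        by_cases hj' : j' = j₀
        · have hjlt : j < j₀ := hj' ▸ hlt
          rw [hj', hw0, (hrest j (ne_of_lt hjlt)).2]
          exact hbefore j hjlt
        · by_cases hj : j = j₀
          · rw [hj, hw0]
            rw [(hrest j' hj').2] at h2 ⊢
            have hj₀lt : j₀ < j' := hj ▸ hlt
            have hwj₀ : 0 < S.w κ i j₀ := by
              by_contra hc
              have h0 : S.w κ i j₀ = 0 := le_antisymm (not_lt.1 hc)
                ((IH i).nonneg S.c_pos j₀)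
              rw [B j₀ j' hj₀lt.le h0] at h2
              exact lt_irrefl 0 h2
            exact lt_trans (C j₀ j' hj₀lt hwj₀ h2) hj₀
          · rw [(hrest j hj).2] at h1
            rw [(hrest j' hj').2] at h2
            rw [(hrest j hj).2, (hrest j' hj').2]
            exact C j j' hlt h1 h2
    · have h := S.phase1_noslot κ i hl hs
      refine ⟨fun j => ?_, fun j j' hle h0 => ?_, fun j j' hlt h1 h2 => ?_⟩
      · rw [(h j).1, (h j).2]; exact Q j
      · rw [(h j').2]; exact B j j' hle ((h j).2 ▸ h0)
      · rw [(h j).2, (h j').2]; exact C j j' hlt ((h j).2 ▸ h1) ((h j').2 ▸ h2)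

lemma cbaa_inv_step2 {n : ℕ} (S : CBAA n) (κ : ℕ)
    (IH : ∀ i, CBAAInv S.c (S.w' κ i) (S.v' κ i)) :
    ∀ i, CBAAInv S.c (S.w (κ+1) i) (S.v (κ+1) i) := by
  intro i
  refine ⟨fun j => ?_, fun j j' hle h0 => ?_, fun j j' hlt h1 h2 => ?_⟩
  · obtain ⟨h, _, hw, hv, _⟩ := S.phase2 κ i j
    rw [hw, hv]; exact (IH h).1 j
  · obtain ⟨h, hn, hw, _, hmax⟩ := S.phase2 κ i j
    obtain ⟨h', hn', hw', _, _⟩ := S.phase2 κ i j'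
    rw [hw']
    have hle0 : S.w' κ h' j ≤ 0 := by
      have hm := hmax h' hn'
      rwa [← hw, h0] at hm
    have : S.w' κ h' j = 0 := le_antisymm hle0 ((IH h').nonneg S.c_pos j)
    exact (IH h').2.1 j j' hle this
  · obtain ⟨h, hn, hw, _, hmax⟩ := S.phase2 κ i j
    obtain ⟨h', hn', hw', _, _⟩ := S.phase2 κ i j'
    rw [hw'] at h2 ⊢
    have hpos : 0 < S.w' κ h' j := by
      rcases ((IH h').nonneg S.c_pos j).lt_or_eq with hp | hp
      · exact hp
      · exact absurd ((IH h').2.1 j j' hlt.le hp.symm ▸ h2) (lt_irrefl 0)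
    calc S.w' κ h' j' < S.w' κ h' j := (IH h').2.2 j j' hlt hpos h2
      _ ≤ S.w' κ h j := hmax h' hn'
      _ = S.w (κ+1) i j := hw.symm

lemma cbaa_inv {n : ℕ} (S : CBAA n) : ∀ κ i, CBAAInv S.c (S.w κ i) (S.v κ i) := by
  intro κ
  induction κ with
  | zero =>
    intro i
    refine ⟨fun j => Or.inl (S.init_w i j), fun j j' _ _ => S.init_w i j',
      fun j j' _ h1 _ => absurd (S.init_w i j ▸ h1) (lt_irrefl 0)⟩
  | succ κ ih => exact cbaa_inv_step2 S κ (cbaa_inv_step1 S κ ih)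

/-- the nonzero entries of each agent's bid vector are strictly
decreasing along positions, both for the stored vectors `w` and for the
intermediate vectors `w'` produced by the local auction phase (i.e. the invariant
is preserved by both phases). -/
theorem cbaa_bid_vector_sorted {n : ℕ} (S : CBAA n) :
    (∀ κ i (j j' : Fin n), j < j' → 0 < S.w κ i j → 0 < S.w κ i j' →
      S.w κ i j' < S.w κ i j) ∧
    (∀ κ i (j j' : Fin n), j < j' → 0 < S.w' κ i j → 0 < S.w' κ i j' →
      S.w' κ i j' < S.w' κ i j) := by
  exact ⟨fun κ i j j' hlt h1 h2 => (cbaa_inv S κ i).2.2 j j' hlt h1 h2,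
    fun κ i j j' hlt h1 h2 =>
      (cbaa_inv_step1 S κ (cbaa_inv S κ) i).2.2 j j' hlt h1 h2⟩
end

section
/- If the first agent ι₁ to obtain the full sorted solution does so at iteration κ₁ by inserting its own bid into the last position of its bid vector, then ι₁ is the agent with the minimum bid, i.e., c_{ι₁} = min_j c_j. -/
/-- if at iteration `κ₁` agent `ι₁` obtains the full sorted solution in
Phase 1 by inserting its own bid into the last position of its vectors, then `ι₁`
is the agent with the minimum bid. -/
theorem cbaa_first_solver_has_min_bid {n : ℕ} (hn : 0 < n) (S : CBAA n)
    (σ : Equiv.Perm (Fin n)) (hσ : SortsBids S.c σ)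
    (κ₁ : ℕ) (ι₁ : Fin n)
    (hsol_v : ∀ j, S.v' κ₁ ι₁ j = some (σ j))
    (hsol_w : ∀ j, S.w' κ₁ ι₁ j = S.c (σ j))
    (hlast : S.v' κ₁ ι₁ ⟨n - 1, by omega⟩ = some ι₁) :
    ∀ h, S.c ι₁ ≤ S.c h := by
  intro h
  have hlast' := hsol_v ⟨n - 1, by omega⟩
  rw [hlast] at hlast'
  have hι : ι₁ = σ ⟨n - 1, by omega⟩ := Option.some_injective _ hlast'
  set a : Fin n := σ.symm h with ha
  have hh : h = σ a := (σ.apply_symm_apply h).symm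
  rcases lt_or_eq_of_le (show a ≤ ⟨n - 1, by omega⟩ from Fin.le_def.mpr (by have := a.is_lt; simp; omega)) with hlt | heq
  · rw [hι, hh]
    exact le_of_lt (hσ a _ hlt)
  · rw [hι, hh, heq]
end
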